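/- Let 𝒦 be a class-λ-accessible category. Then the morphism category 𝒦^→ is class-λ-accessible, its λ-presentable objects are exactly the morphisms of 𝒦 whose domain and codomain are λ-presentable in 𝒦, and both projection functors P₁, P₂: 𝒦^→ → 𝒦 (sending a morphism A → B to A and to B respectively) are strongly class-λ-accessible. Moreover, if 𝒦 is class-locally λ-presentable then so is 𝒦^→. -/

import Mathlib

universe w₂ w₁ w v u u₁ u₂ u₃

open CategoryTheory CategoryTheory.Limits Opposite Order

namespace ClassAcc

/-- A category `J` is `κ`-filtered provided that every diagram in `J` with fewer than `κ`
morphisms admits a cocone. -/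
def IsCardinalFiltered (J : Type w) [Category.{w₁} J] (κ : Cardinal.{v}) : Prop :=
  ∀ (D : Type v) [SmallCategory D], Cardinal.mk (Σ (a : D) (b : D), a ⟶ b) < κ →
    ∀ (F : D ⥤ J), Nonempty (Cocone F)

/-- A category has `κ`-filtered colimits if it has colimits of all small `κ`-filtered shapes. -/
def HasCardinalFilteredColimits (κ : Cardinal.{v}) (K : Type u) [Category.{w} K] : Prop :=
  ∀ (J : Type v) [SmallCategory J], IsCardinalFiltered J κ → HasColimitsOfShape J K

/-- An object `X` is `κ`-presentable if `Hom(X, -)` preserves `κ`-filtered colimits. -/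
def IsPresentable (κ : Cardinal.{v}) {K : Type u} [Category.{w} K] (X : K) : Prop :=
  ∀ (J : Type v) [SmallCategory J], IsCardinalFiltered J κ →
    PreservesColimitsOfShape J (coyoneda.obj (op X))

/-- `X` is a `κ`-filtered colimit of `κ`-presentable objects. -/
def IsFilteredColimitOfPresentables (κ : Cardinal.{v}) {K : Type u} [Category.{w} K]
    (X : K) : Prop :=
  ∃ (J : Cat.{v, v}) (D : J ⥤ K) (c : Cocone D),
    IsCardinalFiltered (J : Type v) κ ∧ Nonempty (IsColimit c) ∧ c.pt = X ∧
      ∀ j, IsPresentable κ (D.obj j)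

/-- A category `K` is class-`κ`-accessible if it has `κ`-filtered colimits and every object
is a `κ`-filtered colimit of `κ`-presentable objects. -/
def ClassAccessible (κ : Cardinal.{v}) (K : Type u) [Category.{w} K] : Prop :=
  HasCardinalFilteredColimits κ K ∧ ∀ X : K, IsFilteredColimitOfPresentables κ X

/-- A class-`κ`-accessible category which is complete and cocomplete is
class-locally `κ`-presentable. -/
def ClassLocallyPresentable (κ : Cardinal.{v}) (K : Type u) [Category.{w} K] : Prop :=
  ClassAccessible κ K ∧ HasLimitsOfSize.{v, v} K ∧ HasColimitsOfSize.{v, v} K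

/-- A category is class-accessible if it is class-`κ`-accessible for some regular cardinal. -/
def IsClassAccessibleCat (K : Type u) [Category.{v} K] : Prop :=
  ∃ κ : Cardinal.{v}, κ.IsRegular ∧ ClassAccessible κ K

/-- A category is class-locally presentable if it is class-locally `κ`-presentable for some
regular cardinal `κ`. -/
def IsClassLocallyPresentableCat (K : Type u) [Category.{v} K] : Prop :=
  ∃ κ : Cardinal.{v}, κ.IsRegular ∧ ClassLocallyPresentable κ K

/-- A functor preserves `κ`-filtered colimits. -/
def PreservesCardinalFilteredColimits (κ : Cardinal.{v}) {K : Type u} [Category.{w} K]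
    {L : Type u₁} [Category.{w₁} L] (F : K ⥤ L) : Prop :=
  ∀ (J : Type v) [SmallCategory J], IsCardinalFiltered J κ → PreservesColimitsOfShape J F

/-- A class-`κ`-accessible functor between class-`κ`-accessible categories. -/
def ClassAccessibleFunctor (κ : Cardinal.{v}) {K : Type u} [Category.{w} K]
    {L : Type u₁} [Category.{w₁} L] (F : K ⥤ L) : Prop :=
  ClassAccessible κ K ∧ ClassAccessible κ L ∧ PreservesCardinalFilteredColimits κ F

/-- A strongly class-`κ`-accessible functor moreover preserves `κ`-presentable objects. -/
def StronglyClassAccessibleFunctor (κ : Cardinal.{v}) {K : Type u} [Category.{w} K]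
    {L : Type u₁} [Category.{w₁} L] (F : K ⥤ L) : Prop :=
  ClassAccessibleFunctor κ F ∧ ∀ X : K, IsPresentable κ X → IsPresentable κ (F.obj X)

/-- `F` is strongly class-accessible if it is strongly class-`κ`-accessible for some regular
cardinal `κ`. -/
def IsStronglyClassAccessibleFunctor {K : Type u} [Category.{v} K]
    {L : Type u₁} [Category.{v} L] (F : K ⥤ L) : Prop :=
  ∃ κ : Cardinal.{v}, κ.IsRegular ∧ StronglyClassAccessibleFunctor κ F

/-- A full subcategory (given by a predicate on objects) is closed under `κ`-filtered colimits. -/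
def ClosedUnderCardinalFilteredColimits (κ : Cardinal.{v}) {K : Type u} [Category.{w} K]
    (P : K → Prop) : Prop :=
  ∀ (J : Type v) [SmallCategory J], IsCardinalFiltered J κ →
    ∀ (D : J ⥤ K) (c : Cocone D), IsColimit c → (∀ j, P (D.obj j)) → P c.pt

/-- A full subcategory is strongly accessibly embedded if for some regular cardinal `κ` it is
closed under `κ`-filtered colimits and its inclusion preserves `κ`-presentable objects. -/
def StronglyAccessiblyEmbedded {K : Type u} [Category.{v} K] (P : K → Prop) : Prop :=
  ∃ κ : Cardinal.{v}, κ.IsRegular ∧ ClosedUnderCardinalFilteredColimits κ P ∧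
    ∀ X : ObjectProperty.FullSubcategory P, IsPresentable κ X → IsPresentable κ X.obj

end ClassAcc

/-!
Write `A = colim DA` and `B = colim DB` as `κ`-filtered colimits of `κ`-presentable objects. The
squares `u : DA i ⟶ DB j` lying over `φ : A ⟶ B` form a `κ`-filtered category: presentability of
`DA i` lets any `< κ` family of such squares be merged by moving far enough in `J`. Its
projections to `I` and `J` are final, so the diagram of these squares has colimit `φ`, computed
componentwise.

On the arrow category, `Hom(f, -)` is the pullback of
`Hom(f.left, L -) ⟶ Hom(f.left, R -) ⟵ Hom(f.right, R -)`, a finite limit of `κ`-accessible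
functors, so `f` is `κ`-presentable as soon as its components are; and a `κ`-presentable `f`
is a retract of one of the squares presenting it, so its components are retracts of
`κ`-presentable objects.
-/

namespace ClassAcc

section Bridge

variable {κ : Cardinal.{v}} [Fact κ.IsRegular]

theorem isCardinalFiltered_iff_categoryTheory {J : Type w} [Category.{w₁} J] :
    IsCardinalFiltered J κ ↔ CategoryTheory.IsCardinalFiltered J κ := by
  have hsize (A : Type v) [SmallCategory A] :
      HasCardinalLT (Arrow A) κ ↔ Cardinal.mk (Σ (a : A) (b : A), a ⟶ b) < κ := by
    rw [hasCardinalLT_iff_cardinal_mk_lt, Cardinal.mk_congr (Arrow.equivSigma A)]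
  exact ⟨fun h => ⟨fun F hA => h _ ((hsize _).mp hA) F⟩,
    fun h D _ hD F => h.nonempty_cocone F ((hsize D).mpr hD)⟩

theorem isPresentable_iff_isCardinalPresentable {K : Type u} [Category.{w} K] (X : K) :
    IsPresentable κ X ↔ IsCardinalPresentable X κ :=
  ⟨fun h => ⟨fun J _ hJ => h J (isCardinalFiltered_iff_categoryTheory.mpr hJ)⟩,
    fun h J _ hJ =>
      have := isCardinalFiltered_iff_categoryTheory.mp hJ
      h.preservesColimitOfShape J⟩

theorem hasCardinalFilteredColimits_iff {K : Type u} [Category.{w} K] :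
    HasCardinalFilteredColimits κ K ↔ CategoryTheory.HasCardinalFilteredColimits K κ :=
  ⟨fun h => ⟨fun J _ hJ => h J (isCardinalFiltered_iff_categoryTheory.mpr hJ)⟩,
    fun h J _ hJ =>
      have := isCardinalFiltered_iff_categoryTheory.mp hJ
      h.hasColimitsOfShape J⟩

theorem preservesCardinalFilteredColimits_iff {K : Type u} [Category.{w} K] {L : Type u₁}
    [Category.{w₁} L] (F : K ⥤ L) :
    PreservesCardinalFilteredColimits κ F ↔ F.IsCardinalAccessible κ :=
  ⟨fun h => ⟨fun J _ hJ => h J (isCardinalFiltered_iff_categoryTheory.mpr hJ)⟩,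
    fun h J _ hJ =>
      have := isCardinalFiltered_iff_categoryTheory.mp hJ
      h.preservesColimitOfShape J⟩

end Bridge

section Presentable

variable {C : Type u} [Category.{v} C] (κ : Cardinal.{v}) [Fact κ.IsRegular]
  {J : Type v} [SmallCategory J] [CategoryTheory.IsCardinalFiltered J κ]
  {D : J ⥤ C} {c : Cocone D}

theorem exists_comp_map_eq_of_isColimit (hc : IsColimit c) {ι : Type*} (hι : HasCardinalLT ι κ)
    {X : ι → C} [∀ k, IsCardinalPresentable (X k) κ] {j : J} (f g : ∀ k, X k ⟶ D.obj j)
    (h : ∀ k, f k ≫ c.ι.app j = g k ≫ c.ι.app j) :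
    ∃ (m : J) (t : j ⟶ m), ∀ k, f k ≫ D.map t = g k ≫ D.map t := by
  choose m a ha using fun k =>
    IsCardinalPresentable.exists_eq_of_isColimit' κ hc (f k) (g k) (h k)
  obtain ⟨n, b, t, hb⟩ := IsCardinalFiltered.wideSpan a hι
  refine ⟨n, t, fun k => ?_⟩
  rw [← hb k, D.map_comp, reassoc_of% (ha k)]

theorem exists_retract_of_isColimit (hc : IsColimit c) [IsCardinalPresentable c.pt κ] :
    ∃ j, Nonempty (Retract c.pt (D.obj j)) :=
  let ⟨j, i, hi⟩ := IsCardinalPresentable.exists_hom_of_isColimit κ hc (𝟙 c.pt)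
  ⟨j, ⟨⟨i, c.ι.app j, hi⟩⟩⟩

end Presentable

section ArrowPresentable

variable {K : Type u} [Category.{v} K] (κ : Cardinal.{v}) [Fact κ.IsRegular]

/-- `Hom(f, -)` as the pullback of `Hom(f.left, L -) ⟶ Hom(f.left, R -) ⟵ Hom(f.right, R -)`,
where `L` and `R` are the two projections `Arrow K ⥤ K`. -/
def arrowHomPullbackCone (f : Arrow K) :
    PullbackCone (Functor.whiskerRight Arrow.leftToRight (coyoneda.obj (op f.left)))
      (Functor.whiskerLeft Arrow.rightFunc (coyoneda.map f.hom.op)) :=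
  PullbackCone.mk (W := coyoneda.obj (op f))
    { app := fun _ => TypeCat.ofHom fun u => u.left }
    { app := fun _ => TypeCat.ofHom fun u => u.right }
    (by ext g u; exact Arrow.w u)

noncomputable def isLimitArrowHomPullbackCone (f : Arrow K) :
    IsLimit (arrowHomPullbackCone f) := by
  refine evaluationJointlyReflectsLimits _ fun g => ?_
  refine (isLimitMapConePullbackConeEquiv _ _).symm ?_
  refine (PullbackCone.isLimitEquivBijective _).symm ⟨fun u u' h => ?_, fun x => ?_⟩
  · exact Arrow.hom_ext _ _ (congrArg (fun x => x.1.1) h) (congrArg (fun x => x.1.2) h)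
  · exact ⟨Arrow.homMk x.1.1 x.1.2 x.2, rfl⟩

variable [CategoryTheory.HasCardinalFilteredColimits K κ]

instance : (Arrow.leftFunc : Arrow K ⥤ K).IsCardinalAccessible κ where
  preservesColimitOfShape J _ _ := by
    have := CategoryTheory.HasCardinalFilteredColimits.hasColimitsOfShape K (κ := κ) J
    infer_instance

instance : (Arrow.rightFunc : Arrow K ⥤ K).IsCardinalAccessible κ where
  preservesColimitOfShape J _ _ := by
    have := CategoryTheory.HasCardinalFilteredColimits.hasColimitsOfShape K (κ := κ) J
    infer_instance

instance : CategoryTheory.HasCardinalFilteredColimits (Arrow K) κ where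
  hasColimitsOfShape J _ _ := by
    have := CategoryTheory.HasCardinalFilteredColimits.hasColimitsOfShape K (κ := κ) J
    infer_instance

theorem isCardinalPresentable_arrow (f : Arrow K) [IsCardinalPresentable f.left κ]
    [IsCardinalPresentable f.right κ] : IsCardinalPresentable f κ := by
  have (k : WalkingCospan) : ((cospan (Functor.whiskerRight Arrow.leftToRight
      (coyoneda.obj (op f.left))) (Functor.whiskerLeft Arrow.rightFunc
        (coyoneda.map f.hom.op))).obj k).IsCardinalAccessible κ := by
    rcases k with _ | _ | _ <;> dsimp <;> infer_instance
  exact Functor.isCardinalAccessible_of_isLimit _ (isLimitArrowHomPullbackCone f) κ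
    (hasCardinalLT_of_finite _ _ (Fact.out : κ.IsRegular).aleph0_le)

end ArrowPresentable

section Stages

variable {K : Type u} [Category.{v} K] {I J : Type v} [SmallCategory I] [SmallCategory J]
  {DA : I ⥤ K} {DB : J ⥤ K} (cA : Cocone DA) (cB : Cocone DB) (φ : cA.pt ⟶ cB.pt)

/-- The index category of the canonical presentation of `Arrow.mk φ`: its objects are the
morphisms `u : DA i ⟶ DB j` with `u ≫ cB.ι j = cA.ι i ≫ φ`, its morphisms the commutative
squares between them. -/
abbrev Stages : Type v :=
  ObjectProperty.FullSubcategory fun x : Comma DA DB =>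
    x.hom ≫ cB.ι.app x.right = cA.ι.app x.left ≫ φ

namespace Stages

abbrev fst : Stages cA cB φ ⥤ I := ObjectProperty.ι _ ⋙ Comma.fst DA DB

abbrev snd : Stages cA cB φ ⥤ J := ObjectProperty.ι _ ⋙ Comma.snd DA DB

def diagram : Stages cA cB φ ⥤ Arrow K where
  obj x := Arrow.mk x.obj.hom
  map f := Arrow.homMk (DA.map f.hom.left) (DB.map f.hom.right) f.hom.w

def cocone : Cocone (diagram cA cB φ) where
  pt := Arrow.mk φ
  ι.app x := Arrow.homMk (cA.ι.app x.obj.left) (cB.ι.app x.obj.right) x.property.symm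
  ι.naturality _ _ f := by
    ext
    exacts [(cA.w _).trans (Category.comp_id _).symm, (cB.w _).trans (Category.comp_id _).symm]

variable {cA cB φ} (κ : Cardinal.{v}) [Fact κ.IsRegular]

theorem isCardinalFiltered [∀ i, IsCardinalPresentable (DA.obj i) κ]
    [CategoryTheory.IsCardinalFiltered I κ] [CategoryTheory.IsCardinalFiltered J κ]
    (hcB : IsColimit cB) : CategoryTheory.IsCardinalFiltered (Stages cA cB φ) κ where
  nonempty_cocone {A _} F hA := by
    have := isFiltered_of_isCardinalFiltered J κ
    let cI := IsCardinalFiltered.cocone (F ⋙ fst cA cB φ) hA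
    let cJ := IsCardinalFiltered.cocone (F ⋙ snd cA cB φ) hA
    obtain ⟨j₀, u₀, hu₀⟩ :=
      IsCardinalPresentable.exists_hom_of_isColimit κ hcB (cA.ι.app cI.pt ≫ φ)
    -- The two candidate legs at `a` agree in the colimit; one `t` equalizes all of them.
    obtain ⟨m, t, ht⟩ := exists_comp_map_eq_of_isColimit κ hcB
      (hasCardinalLT_of_hasCardinalLT_arrow hA)
      (fun a => DA.map (cI.ι.app a) ≫ u₀ ≫ DB.map (IsFiltered.leftToMax j₀ cJ.pt))
      (fun a => (F.obj a).obj.hom ≫ DB.map (cJ.ι.app a ≫ IsFiltered.rightToMax j₀ cJ.pt))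
      (fun a => by simp [hu₀]; exact (F.obj a).property.symm)
    exact ⟨{
      pt := ⟨⟨cI.pt, m, u₀ ≫ DB.map (IsFiltered.leftToMax j₀ cJ.pt ≫ t)⟩, by simp [hu₀]⟩
      ι.app a := ObjectProperty.homMk
        ⟨cI.ι.app a, cJ.ι.app a ≫ IsFiltered.rightToMax j₀ cJ.pt ≫ t, by simpa using ht a⟩
      ι.naturality a b g := by
        ext
        · simpa using cI.w g
        · simpa using cJ.w g =≫ _ }⟩

theorem exists_lift_along_fst [∀ i, IsCardinalPresentable (DA.obj i) κ]
    [CategoryTheory.IsCardinalFiltered J κ] (hcB : IsColimit cB) (x : Stages cA cB φ) {i : I}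
    (p : x.obj.left ⟶ i) :
    ∃ (j : J) (u : DA.obj i ⟶ DB.obj j) (_ : u ≫ cB.ι.app j = cA.ι.app i ≫ φ)
      (q : x.obj.right ⟶ j), DA.map p ≫ u = x.obj.hom ≫ DB.map q := by
  obtain ⟨j₁, w, hw⟩ := IsCardinalPresentable.exists_hom_of_isColimit κ hcB (cA.ι.app i ≫ φ)
  obtain ⟨k, s, q, h⟩ := IsCardinalPresentable.exists_eq_of_isColimit κ hcB (DA.map p ≫ w)
    x.obj.hom (by simp [hw, x.property])
  exact ⟨k, w ≫ DB.map s, by simp [hw], q, by simpa using h⟩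

theorem final_fst [∀ i, IsCardinalPresentable (DA.obj i) κ]
    [CategoryTheory.IsCardinalFiltered I κ] [CategoryTheory.IsCardinalFiltered J κ]
    (hcB : IsColimit cB) : (fst cA cB φ).Final := by
  have := isCardinalFiltered (φ := φ) κ hcB
  have := isFiltered_of_isCardinalFiltered (Stages cA cB φ) κ
  have := isFiltered_of_isCardinalFiltered I κ
  apply Functor.final_of_exists_of_isFiltered
  · intro i
    obtain ⟨j, u, hu⟩ := IsCardinalPresentable.exists_hom_of_isColimit κ hcB (cA.ι.app i ≫ φ)
    exact ⟨⟨⟨i, j, u⟩, hu⟩, ⟨𝟙 i⟩⟩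
  · intro i x s s'
    obtain ⟨j, u, hu, q, hq⟩ := exists_lift_along_fst κ hcB x (IsFiltered.coeqHom s s')
    exact ⟨⟨⟨_, j, u⟩, hu⟩, ObjectProperty.homMk ⟨_, q, hq⟩, IsFiltered.coeq_condition s s'⟩

theorem final_snd [∀ i, IsCardinalPresentable (DA.obj i) κ]
    [CategoryTheory.IsCardinalFiltered I κ] [CategoryTheory.IsCardinalFiltered J κ]
    (hcB : IsColimit cB) : (snd cA cB φ).Final := by
  have := isCardinalFiltered (φ := φ) κ hcB
  have := isFiltered_of_isCardinalFiltered (Stages cA cB φ) κ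
  have := isFiltered_of_isCardinalFiltered J κ
  apply Functor.final_of_exists_of_isFiltered
  · intro j
    obtain ⟨i⟩ := IsCardinalFiltered.nonempty I κ
    obtain ⟨j₁, u, hu⟩ := IsCardinalPresentable.exists_hom_of_isColimit κ hcB (cA.ι.app i ≫ φ)
    exact ⟨⟨⟨i, _, u ≫ DB.map (IsFiltered.rightToMax j j₁)⟩, by simp [hu]⟩,
      ⟨IsFiltered.leftToMax j j₁⟩⟩
  · intro j x s s'
    exact ⟨⟨⟨x.obj.left, _, x.obj.hom ≫ DB.map (IsFiltered.coeqHom s s')⟩, by simp [x.property]⟩,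
      ObjectProperty.homMk ⟨𝟙 _, IsFiltered.coeqHom s s', by simp⟩,
      IsFiltered.coeq_condition s s'⟩

noncomputable def isColimitCocone [∀ i, IsCardinalPresentable (DA.obj i) κ]
    [CategoryTheory.IsCardinalFiltered I κ] [CategoryTheory.IsCardinalFiltered J κ]
    (hcA : IsColimit cA) (hcB : IsColimit cB) : IsColimit (cocone cA cB φ) :=
  have := final_fst (φ := φ) κ hcB
  have := final_snd (φ := φ) κ hcB
  Comma.fstSndJointlyReflectColimit
    ((Functor.Final.isColimitWhiskerEquiv (fst cA cB φ) cA).symm hcA)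
    ((Functor.Final.isColimitWhiskerEquiv (snd cA cB φ) cB).symm hcB)

end Stages

end Stages

section Presentations

def IsFilteredColimitOf (κ : Cardinal.{v}) {K : Type u} [Category.{w} K] (P : K → Prop)
    (X : K) : Prop :=
  ∃ (J : Cat.{v, v}) (D : J ⥤ K) (c : Cocone D),
    IsCardinalFiltered (J : Type v) κ ∧ Nonempty (IsColimit c) ∧ c.pt = X ∧ ∀ j, P (D.obj j)

theorem IsFilteredColimitOf.mono {κ : Cardinal.{v}} {K : Type u} [Category.{w} K]
    {P Q : K → Prop} {X : K} (h : IsFilteredColimitOf κ P X) (hPQ : ∀ Y, P Y → Q Y) :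
    IsFilteredColimitOf κ Q X :=
  let ⟨J, D, c, hJ, hc, hX, hP⟩ := h
  ⟨J, D, c, hJ, hc, hX, fun j => hPQ _ (hP j)⟩

variable {K : Type u} [Category.{v} K] {κ : Cardinal.{v}} [Fact κ.IsRegular]

theorem isFilteredColimitOf_arrow_mk {X Y : K} (hX : IsFilteredColimitOfPresentables κ X)
    (hY : IsFilteredColimitOfPresentables κ Y) (φ : X ⟶ Y) :
    IsFilteredColimitOf κ (fun f : Arrow K => IsPresentable κ f.left ∧ IsPresentable κ f.right)
      (Arrow.mk φ) := by
  obtain ⟨I, DA, cA, hI, ⟨hcA⟩, rfl, presA⟩ := hX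
  obtain ⟨J, DB, cB, hJ, ⟨hcB⟩, rfl, presB⟩ := hY
  have := isCardinalFiltered_iff_categoryTheory.mp hI
  have := isCardinalFiltered_iff_categoryTheory.mp hJ
  have := fun i => (isPresentable_iff_isCardinalPresentable (DA.obj i)).mp (presA i)
  exact ⟨Cat.of (Stages cA cB φ), Stages.diagram cA cB φ, Stages.cocone cA cB φ,
    isCardinalFiltered_iff_categoryTheory.mpr (Stages.isCardinalFiltered κ hcB),
    ⟨Stages.isColimitCocone κ hcA hcB⟩, rfl, fun x => ⟨presA _, presB _⟩⟩

theorem isPresentable_arrow_iff [CategoryTheory.HasCardinalFilteredColimits K κ] (f : Arrow K)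
    (hf : IsFilteredColimitOf κ
      (fun g : Arrow K => IsPresentable κ g.left ∧ IsPresentable κ g.right) f) :
    IsPresentable κ f ↔ IsPresentable κ f.left ∧ IsPresentable κ f.right := by
  simp only [isPresentable_iff_isCardinalPresentable]
  constructor
  · obtain ⟨E, D, c, hE, ⟨hc⟩, rfl, hD⟩ := hf
    intro
    have := isCardinalFiltered_iff_categoryTheory.mp hE
    obtain ⟨e, ⟨r⟩⟩ := exists_retract_of_isColimit κ hc
    have : IsCardinalPresentable (Arrow.leftFunc.obj (D.obj e)) κ :=
      (isPresentable_iff_isCardinalPresentable _).mp (hD e).1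
    have : IsCardinalPresentable (Arrow.rightFunc.obj (D.obj e)) κ :=
      (isPresentable_iff_isCardinalPresentable _).mp (hD e).2
    exact ⟨(r.map Arrow.leftFunc).isCardinalPresentable κ,
      (r.map Arrow.rightFunc).isCardinalPresentable κ⟩
  · rintro ⟨_, _⟩
    exact isCardinalPresentable_arrow κ f

end Presentations

/-- **Remark 3.8 (2).** If `K` is class-`κ`-accessible then so is the morphism category
`K^→`; its `κ`-presentable objects are exactly the morphisms with `κ`-presentable domain
and codomain, both projections are strongly class-`κ`-accessible, and if `K` is
class-locally `κ`-presentable then so is `K^→`. -/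
theorem arrow_classAccessible (κ : Cardinal.{v}) (hκ : κ.IsRegular)
    {K : Type u} [Category.{v} K] (hK : ClassAccessible κ K) :
    ClassAccessible κ (Arrow K) ∧
      (∀ f : Arrow K, IsPresentable κ f ↔
        IsPresentable κ f.left ∧ IsPresentable κ f.right) ∧
      StronglyClassAccessibleFunctor κ (Arrow.leftFunc : Arrow K ⥤ K) ∧
      StronglyClassAccessibleFunctor κ (Arrow.rightFunc : Arrow K ⥤ K) ∧
      (ClassLocallyPresentable κ K → ClassLocallyPresentable κ (Arrow K)) := by
  have : Fact κ.IsRegular := ⟨hκ⟩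
  obtain ⟨hcol, hpres⟩ := hK
  have := hasCardinalFilteredColimits_iff.mp hcol
  have presentation (f : Arrow K) :=
    isFilteredColimitOf_arrow_mk (hpres f.left) (hpres f.right) f.hom
  have char (f : Arrow K) := isPresentable_arrow_iff f (presentation f)
  have hArrow : ClassAccessible κ (Arrow K) :=
    ⟨hasCardinalFilteredColimits_iff.mpr inferInstance,
      fun f => (presentation f).mono fun g hg => (char g).mpr hg⟩
  refine ⟨hArrow, char,
    ⟨⟨hArrow, ⟨hcol, hpres⟩, (preservesCardinalFilteredColimits_iff _).mpr inferInstance⟩,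
      fun f hf => ((char f).mp hf).1⟩,
    ⟨⟨hArrow, ⟨hcol, hpres⟩, (preservesCardinalFilteredColimits_iff _).mpr inferInstance⟩,
      fun f hf => ((char f).mp hf).2⟩, ?_⟩
  rintro ⟨-, hlim, hcolim⟩
  exact ⟨hArrow, inferInstance, inferInstance⟩

end ClassAcc
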